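/- arXiv:2503.12965 — 10 statements merged into one kernel-verified Lean document; each statement's English description precedes it below -/
import Mathlib

section
/- For any subordination algebra (A, ≺) (a bounded distributive lattice A with a relation ≺ satisfying (⊥-⊤), (AND), (OR), (WO-SI)) and elements a, b, c ∈ A, we have c ≤ a ⇒_≺ b in the canonical extension A^δ if and only if a ∧ c ≺ b, where a ⇒_≺ b := ⋁{c ∈ A | a ∧ c ≺ b}. -/
/-! Compactness turns `e c ≤ ⋁{e d | a ⊓ d ≺ b}` into `c ≤ d₁ ⊔ ⋯ ⊔ dₙ` for finitely many such `dᵢ`;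
by (OR) and distributivity `a ⊓ (d₁ ⊔ ⋯ ⊔ dₙ) ≺ b`, and (WO) finishes. -/

/-- A subordination algebra relation on a bounded distributive lattice. -/
structure SubordAlg (A : Type*) [DistribLattice A] [BoundedOrder A] where
  prec : A → A → Prop
  prec_bot : prec ⊥ ⊥
  prec_top : prec ⊤ ⊤
  prec_and : ∀ {a b c : A}, prec a b → prec a c → prec a (b ⊓ c)
  prec_or : ∀ {a b c : A}, prec a c → prec b c → prec (a ⊔ b) c
  prec_wosi : ∀ {a b c d : A}, a ≤ b → prec b c → c ≤ d → prec a d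

/-- A presentation of the canonical extension of a bounded (distributive) lattice `A`:
a complete lattice `Aδ` together with a dense and compact lattice embedding. -/
structure CanExt (A : Type*) [DistribLattice A] [BoundedOrder A]
    (Aδ : Type*) [CompleteLattice Aδ] where
  e : A → Aδ
  le_iff : ∀ a b : A, a ≤ b ↔ e a ≤ e b
  map_inf : ∀ a b : A, e (a ⊓ b) = e a ⊓ e b
  map_sup : ∀ a b : A, e (a ⊔ b) = e a ⊔ e b
  map_bot : e ⊥ = ⊥
  map_top : e ⊤ = ⊤
  dense_closed : ∀ u : Aδ,
    u = sSup {k | (∃ F : Set A, F.Nonempty ∧ k = sInf (e '' F)) ∧ k ≤ u}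
  dense_open : ∀ u : Aδ,
    u = sInf {o | (∃ I : Set A, I.Nonempty ∧ o = sSup (e '' I)) ∧ u ≤ o}
  compact : ∀ F I : Set A, F.Nonempty → I.Nonempty →
    sInf (e '' F) ≤ sSup (e '' I) →
    ∃ F' I' : Set A, F' ⊆ F ∧ I' ⊆ I ∧ F'.Finite ∧ I'.Finite ∧
      sInf (e '' F') ≤ sSup (e '' I')

/-- Closed elements of the canonical extension: meets of nonempty subsets of `A`. -/
def CanExt.IsClosed {A : Type*} [DistribLattice A] [BoundedOrder A]
    {Aδ : Type*} [CompleteLattice Aδ] (C : CanExt A Aδ) (k : Aδ) : Prop :=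
  ∃ F : Set A, F.Nonempty ∧ k = sInf (C.e '' F)

/-- Open elements of the canonical extension: joins of nonempty subsets of `A`. -/
def CanExt.IsOpen {A : Type*} [DistribLattice A] [BoundedOrder A]
    {Aδ : Type*} [CompleteLattice Aδ] (C : CanExt A Aδ) (o : Aδ) : Prop :=
  ∃ I : Set A, I.Nonempty ∧ o = sSup (C.e '' I)

/-- The slanted implication `a ⇒_≺ b := ⋁{c | a ⊓ c ≺ b}` induced by a relation. -/
def slantImp {A : Type*} [DistribLattice A] [BoundedOrder A]
    {Aδ : Type*} [CompleteLattice Aδ] (C : CanExt A Aδ)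
    (R : A → A → Prop) (a b : A) : Aδ :=
  sSup (C.e '' {c | R (a ⊓ c) b})

/-- The slanted co-implication `a ⩾_≺ b := ⋀{c | b ≺ a ⊔ c}` induced by a relation. -/
def slantCoimp {A : Type*} [DistribLattice A] [BoundedOrder A]
    {Aδ : Type*} [CompleteLattice Aδ] (C : CanExt A Aδ)
    (R : A → A → Prop) (a b : A) : Aδ :=
  sInf (C.e '' {c | R b (a ⊔ c)})

/-- The slanted negation `¬a := ⋁{c | a ⊓ c ≺ ⊥}`. -/
def slantNeg {A : Type*} [DistribLattice A] [BoundedOrder A]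
    {Aδ : Type*} [CompleteLattice Aδ] (C : CanExt A Aδ)
    (R : A → A → Prop) (a : A) : Aδ :=
  sSup (C.e '' {c | R (a ⊓ c) ⊥})

/-- The slanted co-negation `∼a := ⋀{c | ⊤ ≺ a ⊔ c}`. -/
def slantSim {A : Type*} [DistribLattice A] [BoundedOrder A]
    {Aδ : Type*} [CompleteLattice Aδ] (C : CanExt A Aδ)
    (R : A → A → Prop) (a : A) : Aδ :=
  sInf (C.e '' {c | R ⊤ (a ⊔ c)})

/-- A slanted Heyting algebra over a canonical extension `C`. -/
structure SlantedHeyting (A : Type*) [DistribLattice A] [BoundedOrder A]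
    (Aδ : Type*) [CompleteLattice Aδ] (C : CanExt A Aδ) where
  imp : A → A → Aδ
  imp_open : ∀ a b : A, C.IsOpen (imp a b)
  imp_inf : ∀ a b₁ b₂ : A, imp a (b₁ ⊓ b₂) = imp a b₁ ⊓ imp a b₂
  imp_top : ∀ a : A, imp a ⊤ = ⊤
  sup_imp : ∀ a₁ a₂ b : A, imp (a₁ ⊔ a₂) b = imp a₁ b ⊓ imp a₂ b
  bot_imp : ∀ b : A, imp ⊥ b = ⊤
  resid : ∀ a b c : A, C.e c ≤ imp a b ↔ C.e (a ⊓ c) ≤ imp ⊤ b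

/-- A slanted co-Heyting algebra over a canonical extension `C`. -/
structure SlantedCoHeyting (A : Type*) [DistribLattice A] [BoundedOrder A]
    (Aδ : Type*) [CompleteLattice Aδ] (C : CanExt A Aδ) where
  coimp : A → A → Aδ
  coimp_closed : ∀ a b : A, C.IsClosed (coimp a b)
  coimp_sup : ∀ a b₁ b₂ : A, coimp a (b₁ ⊔ b₂) = coimp a b₁ ⊔ coimp a b₂
  coimp_bot : ∀ a : A, coimp a ⊥ = ⊥
  inf_coimp : ∀ a₁ a₂ b : A, coimp (a₁ ⊓ a₂) b = coimp a₁ b ⊔ coimp a₂ b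
  top_coimp : ∀ b : A, coimp ⊤ b = ⊥
  resid : ∀ a b c : A, coimp a b ≤ C.e c ↔ coimp ⊥ b ≤ C.e (a ⊔ c)

/-- The π-extension of a slanted implication on a closed first argument and open
second argument: `k ⇒^π o := ⋁{a ⇒ b | k ≤ a, b ≤ o}`. -/
def impPiKO {A : Type*} [DistribLattice A] [BoundedOrder A]
    {Aδ : Type*} [CompleteLattice Aδ] {C : CanExt A Aδ}
    (H : SlantedHeyting A Aδ C) (k o : Aδ) : Aδ :=
  sSup {u | ∃ a b : A, u = H.imp a b ∧ k ≤ C.e a ∧ C.e b ≤ o}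

/-- The π-extension of a slanted implication on arbitrary arguments. -/
def impPi {A : Type*} [DistribLattice A] [BoundedOrder A]
    {Aδ : Type*} [CompleteLattice Aδ] {C : CanExt A Aδ}
    (H : SlantedHeyting A Aδ C) (u v : Aδ) : Aδ :=
  sInf {w | ∃ k o : Aδ, C.IsClosed k ∧ C.IsOpen o ∧ k ≤ u ∧ v ≤ o ∧ w = impPiKO H k o}

theorem SubordAlg.prec_finset_sup {A : Type*} [DistribLattice A] [BoundedOrder A]
    (S : SubordAlg A) {ι : Type*} (s : Finset ι) (f : ι → A) {b : A}
    (h : ∀ i ∈ s, S.prec (f i) b) : S.prec (s.sup f) b :=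
  Finset.sup_induction (p := (S.prec · b)) (S.prec_wosi bot_le S.prec_bot bot_le)
    (fun _ h₁ _ h₂ => S.prec_or h₁ h₂) h

theorem CanExt.sSup_image_finset_le {A : Type*} [DistribLattice A] [BoundedOrder A]
    {Aδ : Type*} [CompleteLattice Aδ] (C : CanExt A Aδ) (t : Finset A) :
    sSup (C.e '' t) ≤ C.e (t.sup id) :=
  sSup_le <| Set.forall_mem_image.2 fun _ hx => (C.le_iff _ _).1 (Finset.le_sup (f := id) hx)

theorem CanExt.exists_finset_le_sup_of_le_sSup {A : Type*} [DistribLattice A]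
    [BoundedOrder A] {Aδ : Type*} [CompleteLattice Aδ] (C : CanExt A Aδ) {c : A}
    {I : Set A} (h : C.e c ≤ sSup (C.e '' I)) :
    ∃ t : Finset A, ↑t ⊆ I ∧ c ≤ t.sup id := by
  rcases I.eq_empty_or_nonempty with rfl | hI
  · refine ⟨∅, by simp, (C.le_iff _ _).2 ?_⟩
    simpa [C.map_bot] using h
  obtain ⟨F', I', hF', hI', -, hI'fin, hle⟩ :=
    C.compact {c} I (Set.singleton_nonempty c) hI (by simpa using h)
  obtain ⟨t, rfl⟩ := hI'fin.exists_finset_coe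
  have hc : C.e c ≤ sInf (C.e '' F') := by
    simpa using sInf_le_sInf (Set.image_mono (f := C.e) hF')
  exact ⟨t, hI', (C.le_iff _ _).2 (hc.trans (hle.trans (C.sSup_image_finset_le t)))⟩

theorem stmt0 {A : Type*} [DistribLattice A] [BoundedOrder A]
    {Aδ : Type*} [CompleteLattice Aδ] (C : CanExt A Aδ) (S : SubordAlg A)
    (a b c : A) :
    C.e c ≤ slantImp C S.prec a b ↔ S.prec (a ⊓ c) b := by
  refine ⟨fun h => ?_, fun h => le_sSup ⟨c, h, rfl⟩⟩
  obtain ⟨t, ht, hct⟩ := C.exists_finset_le_sup_of_le_sSup h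
  have hsup : S.prec (a ⊓ t.sup id) b := by
    rw [Finset.sup_inf_distrib_left]
    exact S.prec_finset_sup t _ fun d hd => ht hd
  exact S.prec_wosi (inf_le_inf_left a hct) hsup le_rfl
end

section
/- For any subordination algebra (A, ≺), the operation a ⇒_≺ b := ⋁{c ∈ A | a ∧ c ≺ b} (computed in the canonical extension A^δ) satisfies: a ⇒_≺ (b₁ ∧ b₂) = (a ⇒_≺ b₁) ∧ (a ⇒_≺ b₂) and a ⇒_≺ ⊤ = ⊤ for all a, b₁, b₂ ∈ A. -/
/-!
Monotonicity of `a ⇒_≺ -` gives `a ⇒_≺ (b₁ ⊓ b₂) ≤ (a ⇒_≺ b₁) ⊓ (a ⇒_≺ b₂)`. For the converse,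
by density it suffices to show that every closed `k` below the right-hand side lies below the
left-hand side. The set `{c | a ⊓ c ≺ b}` is an ideal of `A` (by (⊥-⊤), (OR) and (WO-SI)), so
compactness turns `k ≤ a ⇒_≺ bᵢ` into `k ≤ cᵢ` for a single `cᵢ` with `a ⊓ cᵢ ≺ bᵢ`; by (AND),
`c₁ ⊓ c₂` then witnesses `k ≤ a ⇒_≺ (b₁ ⊓ b₂)`.
-/

namespace CanExt

variable {A : Type*} [DistribLattice A] [BoundedOrder A] {Aδ : Type*} [CompleteLattice Aδ]
  (C : CanExt A Aδ)

lemma exists_mem_sInf_le_of_sInf_le_sSup {F I : Set A} (hF : F.Nonempty) (hI_bot : ⊥ ∈ I)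
    (hI : SupClosed I) (h : sInf (C.e '' F) ≤ sSup (C.e '' I)) :
    ∃ c ∈ I, sInf (C.e '' F) ≤ C.e c := by
  obtain ⟨F', I', hF', hI', -, hI'_fin, h'⟩ := C.compact F I hF ⟨⊥, hI_bot⟩ h
  refine ⟨hI'_fin.toFinset.sup id,
    Finset.sup_mem I hI_bot (fun _ hx _ hy => hI hx hy) _ _
      fun c hc => hI' (hI'_fin.mem_toFinset.1 hc), ?_⟩
  calc sInf (C.e '' F) ≤ sInf (C.e '' F') := sInf_le_sInf (Set.image_mono hF')
    _ ≤ sSup (C.e '' I') := h'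
    _ ≤ C.e (hI'_fin.toFinset.sup id) := sSup_le <| by
        rintro _ ⟨c, hc, rfl⟩
        exact (C.le_iff _ _).1 (Finset.le_sup (f := id) (hI'_fin.mem_toFinset.2 hc))

lemma le_of_forall_isClosed_le {u v : Aδ} (h : ∀ k, C.IsClosed k → k ≤ u → k ≤ v) : u ≤ v := by
  rw [C.dense_closed u]
  exact sSup_le fun k ⟨hk, hku⟩ => h k hk hku

end CanExt

namespace SubordAlg

variable {A : Type*} [DistribLattice A] [BoundedOrder A] (S : SubordAlg A)

lemma bot_prec (b : A) : S.prec ⊥ b :=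
  S.prec_wosi le_rfl S.prec_bot bot_le

lemma supClosed_setOf_prec_inf (a b : A) : SupClosed {c | S.prec (a ⊓ c) b} := by
  intro c₁ h₁ c₂ h₂
  simpa only [Set.mem_ofPred_eq, inf_sup_left] using S.prec_or h₁ h₂

variable {Aδ : Type*} [CompleteLattice Aδ] (C : CanExt A Aδ)

lemma e_le_slantImp {a b c : A} (h : S.prec (a ⊓ c) b) : C.e c ≤ slantImp C S.prec a b :=
  le_sSup (Set.mem_image_of_mem C.e h)

lemma slantImp_mono_right (a : A) : Monotone (slantImp C S.prec a) := fun _ _ hb =>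
  sSup_le_sSup (Set.image_mono fun _ hc => S.prec_wosi le_rfl hc hb)

lemma exists_prec_of_isClosed_le_slantImp {k : Aδ} (hk : C.IsClosed k) {a b : A}
    (h : k ≤ slantImp C S.prec a b) : ∃ c, S.prec (a ⊓ c) b ∧ k ≤ C.e c := by
  obtain ⟨F, hF, rfl⟩ := hk
  exact C.exists_mem_sInf_le_of_sInf_le_sSup hF
    (show S.prec (a ⊓ ⊥) b by rw [inf_bot_eq]; exact S.bot_prec b)
    (S.supClosed_setOf_prec_inf a b) h

lemma slantImp_inf (a b₁ b₂ : A) :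
    slantImp C S.prec a (b₁ ⊓ b₂) = slantImp C S.prec a b₁ ⊓ slantImp C S.prec a b₂ := by
  refine le_antisymm ((S.slantImp_mono_right C a).map_inf_le b₁ b₂) ?_
  refine C.le_of_forall_isClosed_le fun k hk hle => ?_
  obtain ⟨c₁, hc₁, hk₁⟩ := S.exists_prec_of_isClosed_le_slantImp C hk (hle.trans inf_le_left)
  obtain ⟨c₂, hc₂, hk₂⟩ := S.exists_prec_of_isClosed_le_slantImp C hk (hle.trans inf_le_right)
  have hc : S.prec (a ⊓ (c₁ ⊓ c₂)) (b₁ ⊓ b₂) :=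
    S.prec_and (S.prec_wosi (inf_le_inf_left a inf_le_left) hc₁ le_rfl)
      (S.prec_wosi (inf_le_inf_left a inf_le_right) hc₂ le_rfl)
  calc k ≤ C.e c₁ ⊓ C.e c₂ := le_inf hk₁ hk₂
    _ = C.e (c₁ ⊓ c₂) := (C.map_inf _ _).symm
    _ ≤ slantImp C S.prec a (b₁ ⊓ b₂) := S.e_le_slantImp C hc

lemma slantImp_top (a : A) : slantImp C S.prec a ⊤ = ⊤ :=
  top_unique <| C.map_top ▸ S.e_le_slantImp C (S.prec_wosi le_top S.prec_top le_rfl)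

end SubordAlg

theorem stmt1 {A : Type*} [DistribLattice A] [BoundedOrder A]
    {Aδ : Type*} [CompleteLattice Aδ] (C : CanExt A Aδ) (S : SubordAlg A)
    (a b₁ b₂ : A) :
    slantImp C S.prec a (b₁ ⊓ b₂) = slantImp C S.prec a b₁ ⊓ slantImp C S.prec a b₂ ∧
    slantImp C S.prec a ⊤ = ⊤ :=
  ⟨S.slantImp_inf C a b₁ b₂, S.slantImp_top C a⟩
end

section
/- For any subordination algebra (A, ≺) and a, b, c ∈ A: a ∧ c ≤ ⊤ ⇒_≺ b if and only if c ≤ a ⇒_≺ b, where a ⇒_≺ b := ⋁{c ∈ A | a ∧ c ≺ b} in the canonical extension A^δ. -/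
/-! Compactness of the canonical extension makes the embedding reflect the order between
elements of `A` and joins of ideals of `A`. Both sides of the equivalence then say that
`a ⊓ c ≺ b`, because `{c | a ⊓ c ≺ b}` is an ideal whose join is `a ⇒_≺ b`. -/

namespace CanExt

variable {A : Type*} [DistribLattice A] [BoundedOrder A] {Aδ : Type*} [CompleteLattice Aδ]

theorem e_le_e_iff (C : CanExt A Aδ) {a b : A} : C.e a ≤ C.e b ↔ a ≤ b :=
  (C.le_iff a b).symm

theorem exists_finite_subset_of_e_le_sSup (C : CanExt A Aδ) {x : A} {I : Set A}
    (hI : I.Nonempty) (h : C.e x ≤ sSup (C.e '' I)) :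
    ∃ J ⊆ I, J.Finite ∧ C.e x ≤ sSup (C.e '' J) := by
  obtain ⟨F, J, hF, hJ, -, hJfin, hFJ⟩ :=
    C.compact {x} I (Set.singleton_nonempty x) hI (by rwa [Set.image_singleton, sInf_singleton])
  refine ⟨J, hJ, hJfin, le_trans ?_ hFJ⟩
  calc C.e x = sInf (C.e '' {x}) := by rw [Set.image_singleton, sInf_singleton]
    _ ≤ sInf (C.e '' F) := sInf_le_sInf (Set.image_mono hF)

theorem e_le_sSup_ideal_iff (C : CanExt A Aδ) (I : Order.Ideal A) {x : A} :
    C.e x ≤ sSup (C.e '' I) ↔ x ∈ I := by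
  refine ⟨fun h => ?_, fun hx => le_sSup (Set.mem_image_of_mem C.e hx)⟩
  obtain ⟨J, hJI, hJfin, hxJ⟩ := C.exists_finite_subset_of_e_le_sSup I.nonempty h
  have hsup_mem : hJfin.toFinset.sup id ∈ I :=
    (Order.Ideal.finsetSup_mem_iff I).2 fun y hy => hJI (hJfin.mem_toFinset.1 hy)
  refine I.lower (C.e_le_e_iff.1 (hxJ.trans (sSup_le ?_))) hsup_mem
  rintro _ ⟨y, hy, rfl⟩
  exact C.e_le_e_iff.2 (Finset.le_sup (f := id) (hJfin.mem_toFinset.2 hy))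

end CanExt

namespace SubordAlg

variable {A : Type*} [DistribLattice A] [BoundedOrder A]

def impIdeal (S : SubordAlg A) (a b : A) : Order.Ideal A where
  carrier := {c | S.prec (a ⊓ c) b}
  lower' _ _ hdc hc := S.prec_wosi (inf_le_inf_left a hdc) hc le_rfl
  nonempty' := ⟨⊥, S.prec_wosi (by rw [inf_bot_eq]) S.prec_bot bot_le⟩
  directed' x hx y hy :=
    ⟨x ⊔ y, show S.prec (a ⊓ (x ⊔ y)) b by rw [inf_sup_left]; exact S.prec_or hx hy,
      le_sup_left, le_sup_right⟩

theorem e_le_slantImp_iff {Aδ : Type*} [CompleteLattice Aδ] (C : CanExt A Aδ)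
    (S : SubordAlg A) {a b c : A} :
    C.e c ≤ slantImp C S.prec a b ↔ S.prec (a ⊓ c) b :=
  C.e_le_sSup_ideal_iff (S.impIdeal a b)

end SubordAlg

theorem stmt3 {A : Type*} [DistribLattice A] [BoundedOrder A]
    {Aδ : Type*} [CompleteLattice Aδ] (C : CanExt A Aδ) (S : SubordAlg A)
    (a b c : A) :
    C.e (a ⊓ c) ≤ slantImp C S.prec ⊤ b ↔ C.e c ≤ slantImp C S.prec a b := by
  rw [SubordAlg.e_le_slantImp_iff, SubordAlg.e_le_slantImp_iff, top_inf_eq]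
end

section
/- Let (A, ⇒) be a slanted Heyting algebra. Define a ≺_⇒ b iff a ≤ ⊤ ⇒ b. Then (A, ≺_⇒) is a subordination algebra: ≺_⇒ satisfies (⊥-⊤), (AND), (OR), and (WO-SI). -/
namespace SlantedHeyting

variable {A : Type*} [DistribLattice A] [BoundedOrder A]
  {Aδ : Type*} [CompleteLattice Aδ] {C : CanExt A Aδ}

theorem imp_mono_right (H : SlantedHeyting A Aδ C) (a : A) {b b' : A} (h : b ≤ b') :
    H.imp a b ≤ H.imp a b' :=
  inf_eq_left.mp (by rw [← H.imp_inf, inf_eq_left.mpr h])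

def toSubordAlg (H : SlantedHeyting A Aδ C) : SubordAlg A where
  prec a b := C.e a ≤ H.imp ⊤ b
  prec_bot := C.map_bot ▸ bot_le
  prec_top := (H.imp_top ⊤).symm ▸ le_top
  prec_and hb hc := (H.imp_inf ⊤ _ _).symm ▸ le_inf hb hc
  prec_or ha hb := (C.map_sup _ _).symm ▸ sup_le ha hb
  prec_wosi hab hbc hcd :=
    ((C.le_iff _ _).mp hab).trans (hbc.trans (H.imp_mono_right ⊤ hcd))

end SlantedHeyting

theorem stmt4 {A : Type*} [DistribLattice A] [BoundedOrder A]
    {Aδ : Type*} [CompleteLattice Aδ] (C : CanExt A Aδ)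
    (H : SlantedHeyting A Aδ C) :
    (C.e (⊥ : A) ≤ H.imp ⊤ ⊥) ∧
    (C.e (⊤ : A) ≤ H.imp ⊤ ⊤) ∧
    (∀ a b c : A, C.e a ≤ H.imp ⊤ b → C.e a ≤ H.imp ⊤ c → C.e a ≤ H.imp ⊤ (b ⊓ c)) ∧
    (∀ a b c : A, C.e a ≤ H.imp ⊤ c → C.e b ≤ H.imp ⊤ c → C.e (a ⊔ b) ≤ H.imp ⊤ c) ∧
    (∀ a b c d : A, a ≤ b → C.e b ≤ H.imp ⊤ c → c ≤ d → C.e a ≤ H.imp ⊤ d) :=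
  let S := H.toSubordAlg
  ⟨S.prec_bot, S.prec_top, fun _ _ _ => S.prec_and, fun _ _ _ => S.prec_or,
    fun _ _ _ _ => S.prec_wosi⟩
end

section
/- The correspondences between subordination algebras and slanted Heyting algebras are mutually inverse: for any subordination algebra (A, ≺), the relation ≺_{⇒_≺} defined by a ≺_{⇒_≺} b iff a ≤ ⊤ ⇒_≺ b coincides with ≺; and for any slanted Heyting algebra (A, ⇒), the operation ⇒_{≺_⇒} defined from the relation a ≺_⇒ b iff a ≤ ⊤ ⇒ b coincides with ⇒. -/
/-!
The subordinates of `b` form an ideal of `A`, and by compactness of the canonical extension an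
element of `A` lies below the join of an ideal exactly when it belongs to it; this recovers `≺`
from `⊤ ⇒_≺ ·`. In the other direction, pseudo-residuation says that `a ∧ c ≺_⇒ b` holds exactly
when `c ≤ a ⇒ b`, so `a ⇒_{≺_⇒} b` is the join of the elements of `A` below the open element
`a ⇒ b`, which is `a ⇒ b` itself.
-/

namespace CanExt

variable {A : Type*} [DistribLattice A] [BoundedOrder A] {Aδ : Type*} [CompleteLattice Aδ]
  (C : CanExt A Aδ)

lemma monotone_e : Monotone C.e := fun a b => (C.le_iff a b).mp

lemma e_le_sSup_image_ideal_iff (I : Order.Ideal A) (a : A) :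
    C.e a ≤ sSup (C.e '' I) ↔ a ∈ I := by
  refine ⟨fun h => ?_, fun ha => le_sSup (Set.mem_image_of_mem _ ha)⟩
  obtain ⟨F, J, hF, hJ, -, hJfin, hFJ⟩ :=
    C.compact {a} I (Set.singleton_nonempty a) I.nonempty (by simpa using h)
  have ha : C.e a ≤ sInf (C.e '' F) := by
    refine le_sInf ?_
    rintro _ ⟨x, hx, rfl⟩
    rw [hF hx]
  have hJsup : sSup (C.e '' J) ≤ C.e (hJfin.toFinset.sup id) := by
    refine sSup_le ?_
    rintro _ ⟨c, hc, rfl⟩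
    exact C.monotone_e (Finset.le_sup (f := id) (hJfin.mem_toFinset.mpr hc))
  have hmem : hJfin.toFinset.sup id ∈ I :=
    I.finsetSup_mem_iff.mpr fun c hc => hJ (hJfin.mem_toFinset.mp hc)
  exact I.lower ((C.le_iff _ _).mpr (ha.trans (hFJ.trans hJsup))) hmem

lemma IsOpen.sSup_image_le_eq {C : CanExt A Aδ} {o : Aδ} (ho : C.IsOpen o) :
    sSup (C.e '' {c | C.e c ≤ o}) = o := by
  obtain ⟨I, -, rfl⟩ := ho
  refine le_antisymm (sSup_le ?_) (sSup_le_sSup (Set.image_mono fun c hc => ?_))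
  · rintro _ ⟨c, hc, rfl⟩
    exact hc
  · exact le_sSup (Set.mem_image_of_mem _ hc)

end CanExt

section

variable {A : Type*} [DistribLattice A] [BoundedOrder A] {Aδ : Type*} [CompleteLattice Aδ]

def SubordAlg.precIdeal (S : SubordAlg A) (b : A) : Order.Ideal A :=
  Order.IsIdeal.toIdeal (I := {c | S.prec c b})
    { IsLowerSet := fun _ _ hyx hx => S.prec_wosi hyx hx le_rfl
      Nonempty := ⟨⊥, S.prec_wosi bot_le S.prec_bot bot_le⟩
      Directed := fun x hx y hy => ⟨x ⊔ y, S.prec_or hx hy, le_sup_left, le_sup_right⟩ }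

theorem SubordAlg.e_le_slantImp_top_iff (C : CanExt A Aδ) (S : SubordAlg A) (a b : A) :
    C.e a ≤ slantImp C S.prec ⊤ b ↔ S.prec a b := by
  simp only [slantImp, top_inf_eq]
  exact C.e_le_sSup_image_ideal_iff (S.precIdeal b) a

def SlantedHeyting.subord {C : CanExt A Aδ} (H : SlantedHeyting A Aδ C) (a b : A) : Prop :=
  C.e a ≤ H.imp ⊤ b

theorem SlantedHeyting.slantImp_subord {C : CanExt A Aδ} (H : SlantedHeyting A Aδ C) (a b : A) :
    slantImp C H.subord a b = H.imp a b := by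
  have hset : {c | H.subord (a ⊓ c) b} = {c | C.e c ≤ H.imp a b} :=
    Set.ext fun c => (H.resid a b c).symm
  rw [slantImp, hset]
  exact (H.imp_open a b).sSup_image_le_eq

end

theorem stmt5 {A : Type*} [DistribLattice A] [BoundedOrder A]
    {Aδ : Type*} [CompleteLattice Aδ] (C : CanExt A Aδ) :
    (∀ S : SubordAlg A, ∀ a b : A,
      (C.e a ≤ slantImp C S.prec ⊤ b ↔ S.prec a b)) ∧
    (∀ H : SlantedHeyting A Aδ C, ∀ a b : A,
      slantImp C (fun x y => C.e x ≤ H.imp ⊤ y) a b = H.imp a b) :=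
  ⟨SubordAlg.e_le_slantImp_top_iff C, SlantedHeyting.slantImp_subord⟩
end

section
/- Let (A, ⇒) be a slanted Heyting algebra with canonical extension (A^δ, ⇒^π). For all closed elements k, k' and open element o of A^δ: k ≤ k' ⇒^π o if and only if there exist a, b, c ∈ A with a ≤ c ⇒ b, k ≤ a, k' ≤ c, and b ≤ o. -/
/-!
Every `a ⇒ b` is open, i.e. a join of elements of `A`, so `k' ⇒^π o` is the join of the set `T`
of those `t ∈ A` lying below some `c ⇒ b` with `k' ≤ c` and `b ≤ o`. This set is closed under
binary joins, since `(c₁ ⇒ b₁) ∨ (c₂ ⇒ b₂) ≤ (c₁ ∧ c₂) ⇒ (b₁ ∨ b₂)`. Compactness therefore turns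
`k ≤ ⋁ T`, for closed `k`, into `k ≤ t` for a single `t ∈ T`, which is the required witness.
-/

section

variable {A : Type*} [DistribLattice A] [BoundedOrder A] {Aδ : Type*} [CompleteLattice Aδ]
  {C : CanExt A Aδ}

lemma SlantedHeyting.imp_le_imp (H : SlantedHeyting A Aδ C) {a a' b b' : A} (ha : a' ≤ a)
    (hb : b ≤ b') : H.imp a b ≤ H.imp a' b' :=
  calc H.imp a b = H.imp (a ⊔ a') b := by rw [sup_eq_left.mpr ha]
    _ ≤ H.imp a' b := H.sup_imp a a' b ▸ inf_le_right
    _ = H.imp a' (b ⊓ b') := by rw [inf_eq_left.mpr hb]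
    _ ≤ H.imp a' b' := H.imp_inf a' b b' ▸ inf_le_right

lemma CanExt.exists_mem_sSup_image_le {I I' : Set A} (hI : I.Nonempty) (hIsup : SupClosed I)
    (hI' : I'.Finite) (hI'I : I' ⊆ I) : ∃ b ∈ I, sSup (C.e '' I') ≤ C.e b := by
  induction I', hI' using Set.Finite.induction_on with
  | empty => obtain ⟨b, hb⟩ := hI; exact ⟨b, hb, by simp⟩
  | @insert x s _ _ ih =>
    obtain ⟨b, hb, hsb⟩ := ih ((Set.subset_insert x s).trans hI'I)
    refine ⟨x ⊔ b, hIsup (hI'I (Set.mem_insert x s)) hb, ?_⟩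
    rw [Set.image_insert_eq, sSup_insert, C.map_sup]
    exact sup_le_sup_left hsb _

lemma CanExt.IsClosed.exists_mem_le_of_le_sSup {k : Aδ} (hk : C.IsClosed k) {I : Set A}
    (hI : I.Nonempty) (hIsup : SupClosed I) (hkI : k ≤ sSup (C.e '' I)) :
    ∃ b ∈ I, k ≤ C.e b := by
  obtain ⟨F, hF, rfl⟩ := hk
  obtain ⟨F', I', hF'F, hI'I, -, hI', hF'I'⟩ := C.compact F I hF hI hkI
  obtain ⟨b, hb, hI'b⟩ := C.exists_mem_sSup_image_le hI hIsup hI' hI'I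
  exact ⟨b, hb, (sInf_le_sInf (Set.image_mono hF'F)).trans (hF'I'.trans hI'b)⟩

def impPiKOBelow (H : SlantedHeyting A Aδ C) (k o : Aδ) : Set A :=
  {t | ∃ a b : A, C.e t ≤ H.imp a b ∧ k ≤ C.e a ∧ C.e b ≤ o}

lemma bot_mem_impPiKOBelow (H : SlantedHeyting A Aδ C) (k o : Aδ) : ⊥ ∈ impPiKOBelow H k o :=
  ⟨⊤, ⊥, by simp [C.map_bot], by simp [C.map_top], by simp [C.map_bot]⟩

lemma supClosed_impPiKOBelow (H : SlantedHeyting A Aδ C) (k o : Aδ) :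
    SupClosed (impPiKOBelow H k o) := by
  rintro t₁ ⟨a₁, b₁, ht₁, hka₁, hb₁o⟩ t₂ ⟨a₂, b₂, ht₂, hka₂, hb₂o⟩
  refine ⟨a₁ ⊓ a₂, b₁ ⊔ b₂, ?_, by simp [C.map_inf, hka₁, hka₂], by simp [C.map_sup, hb₁o, hb₂o]⟩
  rw [C.map_sup]
  exact sup_le (ht₁.trans (H.imp_le_imp inf_le_left le_sup_left))
    (ht₂.trans (H.imp_le_imp inf_le_right le_sup_right))

lemma impPiKO_eq_sSup_impPiKOBelow (H : SlantedHeyting A Aδ C) (k o : Aδ) :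
    impPiKO H k o = sSup (C.e '' impPiKOBelow H k o) := by
  apply le_antisymm
  · refine sSup_le ?_
    rintro _ ⟨a, b, rfl, hka, hbo⟩
    obtain ⟨J, -, hJ⟩ := H.imp_open a b
    rw [hJ]
    refine sSup_le_sSup (Set.image_mono fun j hj => ⟨a, b, ?_, hka, hbo⟩)
    exact hJ ▸ le_sSup (Set.mem_image_of_mem C.e hj)
  · refine sSup_le ?_
    rintro _ ⟨t, ⟨a, b, hab, hka, hbo⟩, rfl⟩
    exact hab.trans (le_sSup ⟨a, b, rfl, hka, hbo⟩)

end

theorem stmt7_general {A : Type*} [DistribLattice A] [BoundedOrder A]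
    {Aδ : Type*} [CompleteLattice Aδ] {C : CanExt A Aδ}
    (H : SlantedHeyting A Aδ C) (k k' o : Aδ)
    (hk : C.IsClosed k) :
    k ≤ impPiKO H k' o ↔
      ∃ a b c : A, C.e a ≤ H.imp c b ∧ k ≤ C.e a ∧ k' ≤ C.e c ∧ C.e b ≤ o := by
  constructor
  · intro hle
    rw [impPiKO_eq_sSup_impPiKOBelow] at hle
    obtain ⟨a, ⟨c, b, hacb, hk'c, hbo⟩, hka⟩ := hk.exists_mem_le_of_le_sSup
      ⟨⊥, bot_mem_impPiKOBelow H k' o⟩ (supClosed_impPiKOBelow H k' o) hle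
    exact ⟨a, b, c, hacb, hka, hk'c, hbo⟩
  · rintro ⟨a, b, c, hacb, hka, hk'c, hbo⟩
    exact hka.trans (hacb.trans (le_sSup ⟨c, b, rfl, hk'c, hbo⟩))

theorem stmt7 {A : Type*} [DistribLattice A] [BoundedOrder A]
    {Aδ : Type*} [CompleteLattice Aδ] {C : CanExt A Aδ}
    (H : SlantedHeyting A Aδ C) (k k' o : Aδ)
    (hk : C.IsClosed k) (hk' : C.IsClosed k') (ho : C.IsOpen o) :
    k ≤ impPiKO H k' o ↔
      ∃ a b c : A, C.e a ≤ H.imp c b ∧ k ≤ C.e a ∧ k' ≤ C.e c ∧ C.e b ≤ o :=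
  stmt7_general H k k' o hk
end

section
/- Let (A, ⇒) be a slanted Heyting algebra with π-extension ⇒^π on A^δ. For all closed elements k, k' and open element o of A^δ: k ≤ k' ⇒^π o if and only if k ∧ k' ≤ ⊤ ⇒^π o. -/
/-!
Both sides reduce, by compactness, to basic implications. Since `k ⇒^π o` is a directed join
of open elements `a ⇒ b`, the closed element `k` lies below it iff it lies below a single
`a ⇒ b` with `k' ≤ a` and `b ≤ o`; in that case compactness puts some `c ∈ A` between `k` and
`a ⇒ b`, and the residuation law turns `c ≤ a ⇒ b` into `a ∧ c ≤ ⊤ ⇒ b`, which bounds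
`k ∧ k'`. Conversely, if `k ∧ k' ≤ ⊤ ⇒ b`, compactness yields `c, c' ∈ A` above `k, k'` with
`c ∧ c' ≤ ⊤ ⇒ b`, and residuation gives `k ≤ c ≤ c' ⇒ b` with `k' ≤ c'`.
-/

section

variable {A : Type*} [DistribLattice A] [BoundedOrder A] {Aδ : Type*} [CompleteLattice Aδ]
  {C : CanExt A Aδ}

namespace CanExt

lemma exists_e_eq_sInf_image (C : CanExt A Aδ) {S : Set A} (hS : S.Finite) :
    ∃ a : A, C.e a = sInf (C.e '' S) := by
  refine Set.Finite.induction_on S hS ⟨⊤, by simp [C.map_top]⟩ ?_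
  rintro a s - - ⟨b, hb⟩
  exact ⟨a ⊓ b, by rw [C.map_inf, hb, Set.image_insert_eq, sInf_insert]⟩

lemma exists_e_eq_sSup_image (C : CanExt A Aδ) {S : Set A} (hS : S.Finite) :
    ∃ a : A, C.e a = sSup (C.e '' S) := by
  refine Set.Finite.induction_on S hS ⟨⊥, by simp [C.map_bot]⟩ ?_
  rintro a s - - ⟨b, hb⟩
  exact ⟨a ⊔ b, by rw [C.map_sup, hb, Set.image_insert_eq, sSup_insert]⟩

lemma IsClosed.inf {k k' : Aδ} (hk : C.IsClosed k) (hk' : C.IsClosed k') :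
    C.IsClosed (k ⊓ k') := by
  obtain ⟨F, hF, rfl⟩ := hk
  obtain ⟨F', -, rfl⟩ := hk'
  exact ⟨F ∪ F', hF.mono Set.subset_union_left, by rw [Set.image_union, sInf_union]⟩

lemma IsClosed.exists_between {k u : Aδ} (hk : C.IsClosed k) (hu : C.IsOpen u) (h : k ≤ u) :
    ∃ c : A, k ≤ C.e c ∧ C.e c ≤ u := by
  obtain ⟨F, hF, rfl⟩ := hk
  obtain ⟨I, hI, rfl⟩ := hu
  obtain ⟨F₀, I₀, hF₀, hI₀, -, hI₀fin, hle⟩ := C.compact F I hF hI h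
  obtain ⟨c, hc⟩ := C.exists_e_eq_sSup_image hI₀fin
  exact ⟨c, hc ▸ (sInf_le_sInf (Set.image_mono hF₀)).trans hle,
    hc ▸ sSup_le_sSup (Set.image_mono hI₀)⟩

lemma IsClosed.exists_inf_le {k k' u : Aδ} (hk : C.IsClosed k) (hk' : C.IsClosed k')
    (hu : C.IsOpen u) (h : k ⊓ k' ≤ u) :
    ∃ c c' : A, k ≤ C.e c ∧ k' ≤ C.e c' ∧ C.e c ⊓ C.e c' ≤ u := by
  obtain ⟨F, hF, rfl⟩ := hk
  obtain ⟨F', -, rfl⟩ := hk'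
  obtain ⟨I, hI, rfl⟩ := hu
  rw [← sInf_union, ← Set.image_union] at h
  obtain ⟨F₀, I₀, hF₀, hI₀, hF₀fin, -, hle⟩ :=
    C.compact _ I (hF.mono Set.subset_union_left) hI h
  obtain ⟨c, hc⟩ := C.exists_e_eq_sInf_image (hF₀fin.inter_of_left F)
  obtain ⟨c', hc'⟩ := C.exists_e_eq_sInf_image (hF₀fin.inter_of_left F')
  refine ⟨c, c', hc ▸ sInf_le_sInf (Set.image_mono Set.inter_subset_right),
    hc' ▸ sInf_le_sInf (Set.image_mono Set.inter_subset_right), ?_⟩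
  calc C.e c ⊓ C.e c' ≤ sInf (C.e '' F₀) := by
        refine le_sInf ?_
        rintro _ ⟨x, hx, rfl⟩
        rcases hF₀ hx with hxF | hxF'
        · exact inf_le_left.trans (hc ▸ sInf_le ⟨x, ⟨hx, hxF⟩, rfl⟩)
        · exact inf_le_right.trans (hc' ▸ sInf_le ⟨x, ⟨hx, hxF'⟩, rfl⟩)
    _ ≤ sSup (C.e '' I₀) := hle
    _ ≤ sSup (C.e '' I) := sSup_le_sSup (Set.image_mono hI₀)

lemma IsClosed.exists_le_of_le_sSup {k : Aδ} (hk : C.IsClosed k) {S : Set Aδ}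
    (hS : S.Nonempty) (hSdir : DirectedOn (· ≤ ·) S) (hSopen : ∀ u ∈ S, C.IsOpen u)
    (h : k ≤ sSup S) : ∃ u ∈ S, k ≤ u := by
  classical
  obtain ⟨F, hF, rfl⟩ := hk
  let J : Set A := {j | ∃ u ∈ S, C.e j ≤ u}
  have hSJ : sSup S ≤ sSup (C.e '' J) := by
    refine sSup_le fun u hu => ?_
    obtain ⟨I, -, rfl⟩ := hSopen u hu
    exact sSup_le_sSup (Set.image_mono fun i hi => ⟨_, hu, le_sSup ⟨i, hi, rfl⟩⟩)
  have hJ : J.Nonempty := by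
    obtain ⟨u, hu⟩ := hS
    obtain ⟨I, ⟨i, hi⟩, rfl⟩ := hSopen u hu
    exact ⟨i, _, hu, le_sSup ⟨i, hi, rfl⟩⟩
  obtain ⟨F₀, J₀, hF₀, hJ₀, -, hJ₀fin, hle⟩ := C.compact F J hF hJ (h.trans hSJ)
  obtain ⟨w, hw, hJ₀w⟩ := Finset.sup_le_of_le_directed S hS hSdir (hJ₀fin.toFinset.image C.e)
    (by
      simp only [Finset.mem_image, Set.Finite.mem_toFinset, forall_exists_index, and_imp,
        forall_apply_eq_imp_iff₂]
      exact fun j hj => hJ₀ hj)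
  refine ⟨w, hw, ?_⟩
  calc sInf (C.e '' F) ≤ sInf (C.e '' F₀) := sInf_le_sInf (Set.image_mono hF₀)
    _ ≤ sSup (C.e '' J₀) := hle
    _ ≤ w := sSup_le fun _ ⟨j, hj, hje⟩ =>
          (Finset.le_sup (f := id) (by simpa using ⟨j, hj, hje⟩)).trans hJ₀w

end CanExt

namespace SlantedHeyting

lemma imp_le_imp_s8 (H : SlantedHeyting A Aδ C) {a₁ a₂ b₁ b₂ : A} (ha : a₁ ≤ a₂) (hb : b₁ ≤ b₂) :
    H.imp a₂ b₁ ≤ H.imp a₁ b₂ :=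
  calc H.imp a₂ b₁ ≤ H.imp a₁ b₁ := by
        rw [← sup_eq_right.mpr ha, H.sup_imp]; exact inf_le_left
    _ ≤ H.imp a₁ b₂ := by
        rw [← inf_eq_left.mpr hb, H.imp_inf]; exact inf_le_right

end SlantedHeyting

lemma imp_le_impPiKO (H : SlantedHeyting A Aδ C) {k o : Aδ} {a b : A} (ha : k ≤ C.e a)
    (hb : C.e b ≤ o) : H.imp a b ≤ impPiKO H k o :=
  le_sSup ⟨a, b, rfl, ha, hb⟩

lemma directedOn_impPiKO (H : SlantedHeyting A Aδ C) (k o : Aδ) :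
    DirectedOn (· ≤ ·) {u | ∃ a b : A, u = H.imp a b ∧ k ≤ C.e a ∧ C.e b ≤ o} := by
  rintro _ ⟨a₁, b₁, rfl, ha₁, hb₁⟩ _ ⟨a₂, b₂, rfl, ha₂, hb₂⟩
  exact ⟨H.imp (a₁ ⊓ a₂) (b₁ ⊔ b₂),
    ⟨_, _, rfl, C.map_inf a₁ a₂ ▸ le_inf ha₁ ha₂, C.map_sup b₁ b₂ ▸ sup_le hb₁ hb₂⟩,
    H.imp_le_imp_s8 inf_le_left le_sup_left, H.imp_le_imp_s8 inf_le_right le_sup_right⟩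

lemma le_impPiKO_iff (H : SlantedHeyting A Aδ C) {k k' : Aδ} (hk : C.IsClosed k) (o : Aδ) :
    k ≤ impPiKO H k' o ↔ ∃ a b : A, k' ≤ C.e a ∧ C.e b ≤ o ∧ k ≤ H.imp a b := by
  refine ⟨fun h => ?_, fun ⟨a, b, ha, hb, hkab⟩ => hkab.trans (imp_le_impPiKO H ha hb)⟩
  have hne : {u | ∃ a b : A, u = H.imp a b ∧ k' ≤ C.e a ∧ C.e b ≤ o}.Nonempty :=
    ⟨_, ⊤, ⊥, rfl, C.map_top ▸ le_top, C.map_bot ▸ bot_le⟩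
  obtain ⟨_, ⟨a, b, rfl, ha, hb⟩, hkab⟩ := hk.exists_le_of_le_sSup hne
    (directedOn_impPiKO H k' o) (by rintro _ ⟨a, b, rfl, -, -⟩; exact H.imp_open a b) h
  exact ⟨a, b, ha, hb, hkab⟩

end

theorem stmt8_general {A : Type*} [DistribLattice A] [BoundedOrder A]
    {Aδ : Type*} [CompleteLattice Aδ] {C : CanExt A Aδ}
    (H : SlantedHeyting A Aδ C) (k k' o : Aδ)
    (hk : C.IsClosed k) (hk' : C.IsClosed k') :
    k ≤ impPiKO H k' o ↔ k ⊓ k' ≤ impPiKO H ⊤ o := by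
  constructor
  · intro h
    obtain ⟨a, b, hk'a, hbo, hkab⟩ := (le_impPiKO_iff H hk o).1 h
    obtain ⟨c, hkc, hcab⟩ := hk.exists_between (H.imp_open a b) hkab
    calc k ⊓ k' ≤ C.e (a ⊓ c) := C.map_inf a c ▸ le_inf (inf_le_right.trans hk'a)
          (inf_le_left.trans hkc)
      _ ≤ H.imp ⊤ b := (H.resid a b c).1 hcab
      _ ≤ impPiKO H ⊤ o := imp_le_impPiKO H (C.map_top ▸ le_rfl) hbo
  · intro h
    obtain ⟨a, b, hta, hbo, hab⟩ := (le_impPiKO_iff H (hk.inf hk') o).1 h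
    obtain rfl : a = ⊤ := top_unique ((C.le_iff ⊤ a).2 (C.map_top ▸ hta))
    obtain ⟨c, c', hkc, hk'c', hcc'⟩ := hk.exists_inf_le hk' (H.imp_open ⊤ b) hab
    have hcimp : C.e c ≤ H.imp c' b := (H.resid c' b c).2 (by rwa [C.map_inf, inf_comm])
    exact (le_impPiKO_iff H hk o).2 ⟨c', b, hk'c', hbo, hkc.trans hcimp⟩

theorem stmt8 {A : Type*} [DistribLattice A] [BoundedOrder A]
    {Aδ : Type*} [CompleteLattice Aδ] {C : CanExt A Aδ}
    (H : SlantedHeyting A Aδ C) (k k' o : Aδ)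
    (hk : C.IsClosed k) (hk' : C.IsClosed k') (ho : C.IsOpen o) :
    k ≤ impPiKO H k' o ↔ k ⊓ k' ≤ impPiKO H ⊤ o :=
  stmt8_general H k k' o hk hk'
end

section
/- Let (A, ⩾) be a slanted co-Heyting algebra. Define a ≺_⩾ b iff ⊥ ⩾ a ≤ b. Then (A, ≺_⩾) is a subordination algebra. -/
/-! The subordination `b ≺ c :↔ ⊥ ⩾ b ≤ c` inherits (OR) and `⊥ ≺ ⊥` from the fact that
`⩾` preserves finite joins in its second argument, which also makes `⊥ ⩾ -` monotone and
so gives (WO-SI); (AND) and `⊤ ≺ ⊤` hold because the embedding `A → Aδ` preserves finite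
meets. -/

namespace SlantedCoHeyting

variable {A : Type*} [DistribLattice A] [BoundedOrder A] {Aδ : Type*} [CompleteLattice Aδ]
  {C : CanExt A Aδ} (H : SlantedCoHeyting A Aδ C)

theorem coimp_mono_right (a : A) {b₁ b₂ : A} (hb : b₁ ≤ b₂) : H.coimp a b₁ ≤ H.coimp a b₂ := by
  rw [← sup_eq_right.mpr hb, H.coimp_sup]
  exact le_sup_left

def subord (b c : A) : Prop :=
  H.coimp ⊥ b ≤ C.e c

def toSubordAlg : SubordAlg A where
  prec := H.subord
  prec_bot := (H.coimp_bot ⊥).trans_le bot_le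
  prec_top := le_top.trans_eq C.map_top.symm
  prec_and hb hc := by
    rw [subord, C.map_inf]
    exact le_inf hb hc
  prec_or ha hb := by
    rw [subord, H.coimp_sup]
    exact sup_le ha hb
  prec_wosi hab hbc hcd :=
    (H.coimp_mono_right ⊥ hab).trans (hbc.trans ((C.le_iff _ _).mp hcd))

end SlantedCoHeyting

theorem stmt11 {A : Type*} [DistribLattice A] [BoundedOrder A]
    {Aδ : Type*} [CompleteLattice Aδ] (C : CanExt A Aδ)
    (H : SlantedCoHeyting A Aδ C) :
    (H.coimp ⊥ ⊥ ≤ C.e (⊥ : A)) ∧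
    (H.coimp ⊥ ⊤ ≤ C.e (⊤ : A)) ∧
    (∀ a b c : A, H.coimp ⊥ a ≤ C.e b → H.coimp ⊥ a ≤ C.e c →
      H.coimp ⊥ a ≤ C.e (b ⊓ c)) ∧
    (∀ a b c : A, H.coimp ⊥ a ≤ C.e c → H.coimp ⊥ b ≤ C.e c →
      H.coimp ⊥ (a ⊔ b) ≤ C.e c) ∧
    (∀ a b c d : A, a ≤ b → H.coimp ⊥ b ≤ C.e c → c ≤ d →
      H.coimp ⊥ a ≤ C.e d) :=
  let S := H.toSubordAlg
  ⟨S.prec_bot, S.prec_top, fun _ _ _ => S.prec_and, fun _ _ _ => S.prec_or,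
    fun _ _ _ _ => S.prec_wosi⟩
end

section
/- Let (A, ≺) be a subordination algebra and define ¬a := ⋁{c ∈ A | a ∧ c ≺ ⊥} and ∼a := ⋀{c ∈ A | ⊤ ≺ a ∨ c} in the canonical extension A^δ. Then for all a, b ∈ A: a ≤ ¬b iff b ≤ ¬a, and ∼a ≤ b iff ∼b ≤ a. -/
/-! By compactness, `e c ≤ ¬a` means that `c` lies below a finite join of elements `c'`
with `a ⊓ c' ≺ ⊥`; by (OR) and (WO-SI) this collapses to `a ⊓ c ≺ ⊥`, a condition
symmetric in `a` and `c`. Dually, `∼a ≤ e c` is equivalent to `⊤ ≺ a ⊔ c`. -/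

namespace SubordAlg

variable {A : Type*} [DistribLattice A] [BoundedOrder A] (S : SubordAlg A)

theorem prec_finset_sup_s12 {ι : Type*} {s : Finset ι} {f : ι → A} {b : A}
    (hs : ∀ i ∈ s, S.prec (f i) b) : S.prec (s.sup f) b :=
  Finset.sup_induction (p := (S.prec · b)) (S.prec_wosi le_rfl S.prec_bot bot_le)
    (fun _ h₁ _ h₂ => S.prec_or h₁ h₂) hs

theorem prec_finset_inf {ι : Type*} {s : Finset ι} {f : ι → A} {a : A}
    (hs : ∀ i ∈ s, S.prec a (f i)) : S.prec a (s.inf f) :=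
  Finset.inf_induction (p := S.prec a) (S.prec_wosi le_top S.prec_top le_rfl)
    (fun _ h₁ _ h₂ => S.prec_and h₁ h₂) hs

end SubordAlg

namespace CanExt

variable {A : Type*} [DistribLattice A] [BoundedOrder A] {Aδ : Type*} [CompleteLattice Aδ]
  (C : CanExt A Aδ)

theorem e_finset_sup (s : Finset A) : C.e (s.sup id) = sSup (C.e '' s) := by
  rw [Finset.apply_sup_eq_sup_comp C.e C.map_sup C.map_bot, Finset.sup_eq_sSup_image]
  rfl

theorem e_finset_inf (s : Finset A) : C.e (s.inf id) = sInf (C.e '' s) := by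
  rw [Finset.apply_inf_eq_inf_comp C.e C.map_inf C.map_top, Finset.inf_eq_sInf_image]
  rfl

theorem exists_finset_le_sup_of_le_sSup_s12 {I : Set A} (hI : I.Nonempty) {a : A}
    (h : C.e a ≤ sSup (C.e '' I)) : ∃ s : Finset A, ↑s ⊆ I ∧ a ≤ s.sup id := by
  obtain ⟨F', I', hF', hI', -, hI'fin, hle⟩ :=
    C.compact {a} I (Set.singleton_nonempty a) hI (by simpa using h)
  refine ⟨hI'fin.toFinset, by simpa using hI', ?_⟩
  rw [C.le_iff, e_finset_sup, hI'fin.coe_toFinset]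
  refine le_trans ?_ hle
  exact le_sInf (Set.forall_mem_image.2 fun x hx => (hF' hx : x = a) ▸ le_rfl)

theorem exists_finset_inf_le_of_sInf_le {F : Set A} (hF : F.Nonempty) {b : A}
    (h : sInf (C.e '' F) ≤ C.e b) : ∃ s : Finset A, ↑s ⊆ F ∧ s.inf id ≤ b := by
  obtain ⟨F', I', hF', hI', hF'fin, -, hle⟩ :=
    C.compact F {b} hF (Set.singleton_nonempty b) (by simpa using h)
  refine ⟨hF'fin.toFinset, by simpa using hF', ?_⟩
  rw [C.le_iff, e_finset_inf, hF'fin.coe_toFinset]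
  refine le_trans hle ?_
  exact sSup_le (Set.forall_mem_image.2 fun x hx => (hI' hx : x = b) ▸ le_rfl)

end CanExt

section SlantedNegations

variable {A : Type*} [DistribLattice A] [BoundedOrder A] {Aδ : Type*} [CompleteLattice Aδ]
  (C : CanExt A Aδ) (S : SubordAlg A)

theorem e_le_slantNeg_iff (a c : A) : C.e c ≤ slantNeg C S.prec a ↔ S.prec (a ⊓ c) ⊥ := by
  refine ⟨fun h => ?_, fun h => le_sSup ⟨c, h, rfl⟩⟩
  obtain ⟨s, hsI, hcs⟩ := C.exists_finset_le_sup_of_le_sSup_s12 (I := {c | S.prec (a ⊓ c) ⊥})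
    ⟨⊥, S.prec_wosi inf_le_right S.prec_bot le_rfl⟩ h
  have hsup : S.prec (a ⊓ s.sup id) ⊥ := by
    rw [Finset.sup_inf_distrib_left]
    exact S.prec_finset_sup_s12 fun i hi => hsI hi
  exact S.prec_wosi (inf_le_inf_left a hcs) hsup le_rfl

theorem slantSim_le_e_iff (a c : A) : slantSim C S.prec a ≤ C.e c ↔ S.prec ⊤ (a ⊔ c) := by
  refine ⟨fun h => ?_, fun h => sInf_le ⟨c, h, rfl⟩⟩
  obtain ⟨s, hsF, hsc⟩ := C.exists_finset_inf_le_of_sInf_le (F := {c | S.prec ⊤ (a ⊔ c)})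
    ⟨⊤, S.prec_wosi le_rfl S.prec_top le_sup_right⟩ h
  have hinf : S.prec ⊤ (a ⊔ s.inf id) := by
    rw [Finset.inf_sup_distrib_left]
    exact S.prec_finset_inf fun i hi => hsF hi
  exact S.prec_wosi le_rfl hinf (sup_le_sup_left hsc a)

end SlantedNegations

theorem stmt12 {A : Type*} [DistribLattice A] [BoundedOrder A]
    {Aδ : Type*} [CompleteLattice Aδ] (C : CanExt A Aδ) (S : SubordAlg A)
    (a b : A) :
    (C.e a ≤ slantNeg C S.prec b ↔ C.e b ≤ slantNeg C S.prec a) ∧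
    (slantSim C S.prec a ≤ C.e b ↔ slantSim C S.prec b ≤ C.e a) := by
  rw [e_le_slantNeg_iff, e_le_slantNeg_iff, slantSim_le_e_iff, slantSim_le_e_iff, inf_comm,
    sup_comm]
  exact ⟨Iff.rfl, Iff.rfl⟩
end

section
/- Let (A, ≺) be a subordination algebra with slanted negation ¬a := ⋁{c ∈ A | a ∧ c ≺ ⊥} in A^δ. Then the inequality ¬⊤ ≤ ⊥ holds in A^δ if and only if for all a ∈ A, a ≺ ⊥ implies a = ⊥. -/
section SlantedNegation

variable {A : Type*} [DistribLattice A] [BoundedOrder A] {Aδ : Type*} [CompleteLattice Aδ]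

theorem CanExt.e_eq_bot_iff (C : CanExt A Aδ) {a : A} : C.e a = ⊥ ↔ a = ⊥ := by
  rw [← le_bot_iff, ← C.map_bot, ← C.le_iff, le_bot_iff]

theorem slantNeg_top (C : CanExt A Aδ) (R : A → A → Prop) :
    slantNeg C R ⊤ = sSup (C.e '' {c | R c ⊥}) := by
  simp only [slantNeg, top_inf_eq]

theorem slantNeg_top_le_bot_iff (C : CanExt A Aδ) (R : A → A → Prop) :
    slantNeg C R ⊤ ≤ ⊥ ↔ ∀ a : A, R a ⊥ → a = ⊥ := by
  simp only [slantNeg_top, le_bot_iff, sSup_eq_bot, Set.forall_mem_image, Set.mem_ofPred_eq,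
    C.e_eq_bot_iff]

end SlantedNegation

theorem stmt13 {A : Type*} [DistribLattice A] [BoundedOrder A]
    {Aδ : Type*} [CompleteLattice Aδ] (C : CanExt A Aδ) (S : SubordAlg A) :
    slantNeg C S.prec ⊤ ≤ ⊥ ↔ ∀ a : A, S.prec a ⊥ → a = ⊥ :=
  slantNeg_top_le_bot_iff C S.prec
end
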